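/- arXiv:2202.08319 — 2 statements merged into one kernel-verified Lean document; each statement's English description precedes it below -/
import Mathlib

section
/- Let R be a commutative ring with 1, let c ∈ R, and let u ∈ R be a unit such that u - 1 ∈ c²R. Then the diagonal matrix h(u) = [[u, 0], [0, u⁻¹]] is an element of E(2,R,cR). -/
/-!
Write `u = 1 + c²t`. Then `h(u) = E₂₁(-cu⁻¹) E₁₂(ct) E₂₁(c) E₁₂(-ctu⁻¹)`, a product of
elementary matrices whose entries lie in `cR`. Each `E₁₂(x)` with `x ∈ cR` is a generator of
`E(2,R,cR)`, and `E₂₁(x)` is the conjugate of `E₁₂(-x)` by the Weyl element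
`E₁₂(1) E₂₁(-1) E₁₂(1) = [[0,1],[-1,0]] ∈ E(2,R)`.
-/

open Matrix

def E12 {R : Type*} [CommRing R] (x : R) : Matrix.SpecialLinearGroup (Fin 2) R :=
  ⟨!![1, x; 0, 1], by simp [Matrix.det_fin_two_of]⟩

def E21 {R : Type*} [CommRing R] (x : R) : Matrix.SpecialLinearGroup (Fin 2) R :=
  ⟨!![1, 0; x, 1], by simp [Matrix.det_fin_two_of]⟩

def hDiag {R : Type*} [CommRing R] (u : Rˣ) : Matrix.SpecialLinearGroup (Fin 2) R :=
  ⟨!![(u : R), 0; 0, ((u⁻¹ : Rˣ) : R)], by simp [Matrix.det_fin_two_of]⟩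

def E2 (R : Type*) [CommRing R] : Subgroup (Matrix.SpecialLinearGroup (Fin 2) R) :=
  Subgroup.closure {M | ∃ x : R, M = E12 x ∨ M = E21 x}

def E2I (R : Type*) [CommRing R] (I : Ideal R) :
    Subgroup (Matrix.SpecialLinearGroup (Fin 2) R) :=
  Subgroup.closure {M | ∃ g ∈ E2 R, ∃ x ∈ I, M = g * E12 x * g⁻¹}

section

variable {R : Type*} [CommRing R]

@[simp] lemma coe_E12 (x : R) : (E12 x : Matrix (Fin 2) (Fin 2) R) = !![1, x; 0, 1] := rfl

@[simp] lemma coe_E21 (x : R) : (E21 x : Matrix (Fin 2) (Fin 2) R) = !![1, 0; x, 1] := rfl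

@[simp] lemma coe_hDiag (u : Rˣ) :
    (hDiag u : Matrix (Fin 2) (Fin 2) R) = !![(u : R), 0; 0, ((u⁻¹ : Rˣ) : R)] := rfl

lemma E12_mem_E2 (x : R) : E12 x ∈ E2 R :=
  Subgroup.subset_closure ⟨x, Or.inl rfl⟩

lemma E21_mem_E2 (x : R) : E21 x ∈ E2 R :=
  Subgroup.subset_closure ⟨x, Or.inr rfl⟩

lemma E12_mem_E2I {I : Ideal R} {x : R} (hx : x ∈ I) : E12 x ∈ E2I R I :=
  Subgroup.subset_closure ⟨1, one_mem _, x, hx, by group⟩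

lemma E21_eq_weyl_conj_E12 (x : R) :
    E21 x = (E12 1 * E21 (-1) * E12 1) * E12 (-x) * (E12 1 * E21 (-1) * E12 1)⁻¹ := by
  rw [eq_mul_inv_iff_mul_eq]
  ext : 1
  simp

lemma E21_mem_E2I {I : Ideal R} {x : R} (hx : x ∈ I) : E21 x ∈ E2I R I := by
  rw [E21_eq_weyl_conj_E12]
  exact Subgroup.subset_closure ⟨_, mul_mem (mul_mem (E12_mem_E2 1) (E21_mem_E2 (-1)))
    (E12_mem_E2 1), -x, neg_mem hx, rfl⟩

lemma hDiag_eq_of_sub_one_eq {c t : R} {u : Rˣ} (hu : (u : R) - 1 = c ^ 2 * t) :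
    hDiag u = E21 (-(c * ↑u⁻¹)) * E12 (c * t) * E21 c * E12 (-(c * t * ↑u⁻¹)) := by
  have hv : (↑u⁻¹ : R) + c ^ 2 * t * ↑u⁻¹ = 1 := by
    linear_combination u.inv_mul - (↑u⁻¹ : R) * hu
  ext i j
  fin_cases i <;> fin_cases j <;>
    simp [Matrix.mul_apply, Fin.sum_univ_two]
  · linear_combination hu
  · linear_combination c * t * hv
  · linear_combination c * hv
  · linear_combination hv - (↑u⁻¹ : R) * c ^ 2 * t * hv

end

/-- Remark after Lemma 3.5: if `u` is a unit with `u - 1 ∈ c²R`, then the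
diagonal matrix `h(u) = [[u,0],[0,u⁻¹]]` lies in `E(2,R,cR)`. -/
theorem stmt3 {R : Type*} [CommRing R] (c : R) (u : Rˣ)
    (hu : (u : R) - 1 ∈ Ideal.span {c ^ 2}) :
    hDiag u ∈ E2I R (Ideal.span {c}) := by
  obtain ⟨t, ht⟩ := Ideal.mem_span_singleton.mp hu
  have hc : c ∈ Ideal.span {c} := Ideal.mem_span_singleton_self c
  rw [hDiag_eq_of_sub_one_eq ht]
  exact mul_mem (mul_mem (mul_mem
    (E21_mem_E2I (neg_mem (Ideal.mul_mem_right _ _ hc)))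
    (E12_mem_E2I (Ideal.mul_mem_right _ _ hc)))
    (E21_mem_E2I hc))
    (E12_mem_E2I (neg_mem (Ideal.mul_mem_right _ _ (Ideal.mul_mem_right _ _ hc))))
end

section
/- Let R be a commutative integral domain with 1, let I ⊴ R be a nonzero ideal, and let ‖·‖ be a non-discrete conjugation-invariant norm on the group E(2,R,I). Then for every ε > 0 there exists a matrix A ∈ E(2,R,I) whose (2,1)-entry is nonzero and with ‖A‖ ≤ ε. -/
open Matrix

/-! Non-discreteness gives elements `g ≠ 1` of `E(2,R,I)` of arbitrarily small norm, and going
below the norm of `-1` we may also take `g ≠ -1`. If the lower-left entry of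
`g = [[a, b], [0, d]]` vanishes, conjugate by `E₂₁(y)` with `y ∈ I`: this keeps the norm and
produces the lower-left entry `y (a - d - y b)`. As `g ≠ ±1` we have `b ≠ 0` or `a ≠ d`, and then
one of `y₀`, `y₀ a` (for any nonzero `y₀ ∈ I`) makes this entry nonzero. -/

open scoped MatrixGroups

lemma Ideal.exists_mem_ne_zero_sub_mul_ne_zero {R : Type*} [CommRing R] [IsDomain R]
    {I : Ideal R} (hI : I ≠ ⊥) {a b d : R} (had : a * d = 1) (hne : b ≠ 0 ∨ a ≠ d) :
    ∃ y ∈ I, y ≠ 0 ∧ a - d - y * b ≠ 0 := by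
  obtain ⟨y₀, hy₀, hy₀_ne⟩ := Submodule.exists_mem_ne_zero_of_ne_bot hI
  by_cases h : a - d - y₀ * b = 0
  · have hb : b ≠ 0 := by
      rintro rfl
      exact hne.resolve_left (not_not.2 rfl) (by linear_combination h)
    have ha : a ≠ 1 := by
      rintro rfl
      exact hb ((mul_eq_zero.1 (by linear_combination -h - had)).resolve_left hy₀_ne)
    refine ⟨y₀ * a, I.mul_mem_right a hy₀, mul_ne_zero hy₀_ne (left_ne_zero_of_mul_eq_one had), ?_⟩
    rw [show a - d - y₀ * a * b = y₀ * b * (1 - a) by linear_combination h]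
    exact mul_ne_zero (mul_ne_zero hy₀_ne hb) (sub_ne_zero.2 ha.symm)
  · exact ⟨y₀, hy₀, hy₀_ne, h⟩

namespace SL2

variable {R : Type*} [CommRing R]

local notation:1024 "↑ₘ" A:1024 => ((A : SL(2, R)) : Matrix (Fin 2) (Fin 2) R)

def weyl (R : Type*) [CommRing R] : SL(2, R) :=
  E12 (-1) * E21 1 * E12 (-1)

lemma weyl_mem_E2 : weyl R ∈ E2 R :=
  mul_mem (mul_mem (Subgroup.subset_closure ⟨-1, .inl rfl⟩)
    (Subgroup.subset_closure ⟨1, .inr rfl⟩)) (Subgroup.subset_closure ⟨-1, .inl rfl⟩)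

lemma weyl_mul_E12_mul_weyl_inv (x : R) : weyl R * E12 x * (weyl R)⁻¹ = E21 (-x) := by
  rw [mul_inv_eq_iff_eq_mul]
  ext i j
  simp only [weyl, Matrix.SpecialLinearGroup.coe_mul]
  fin_cases i <;> fin_cases j <;> simp [E12, E21]

lemma E21_mem_E2I {I : Ideal R} {y : R} (hy : y ∈ I) : E21 y ∈ E2I R I :=
  Subgroup.subset_closure
    ⟨weyl R, weyl_mem_E2, -y, I.neg_mem hy, by rw [weyl_mul_E12_mul_weyl_inv, neg_neg]⟩

lemma E21_mul_mul_E21_inv_apply_one_zero (y : R) (A : SL(2, R)) :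
    ↑ₘ(E21 y * A * (E21 y)⁻¹) 1 0 = ↑ₘA 1 0 + y * (↑ₘA 0 0 - ↑ₘA 1 1 - y * ↑ₘA 0 1) := by
  simp only [Matrix.SpecialLinearGroup.coe_mul, Matrix.SpecialLinearGroup.coe_inv]
  simp [E21, adjugate_fin_two, Matrix.mul_apply, vecMul, dotProduct, Fin.sum_univ_two]
  ring

lemma eq_one_or_eq_neg_one_of_apply_eq_zero [IsDomain R] (A : SL(2, R))
    (hc : ↑ₘA 1 0 = 0) (hb : ↑ₘA 0 1 = 0) (had : ↑ₘA 0 0 = ↑ₘA 1 1) : A = 1 ∨ A = -1 := by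
  have hdet := A.det_coe
  rw [det_fin_two, hc, hb, ← had, mul_zero, sub_zero, mul_self_eq_one_iff] at hdet
  rcases hdet with ha | ha
  · left
    ext i j
    fin_cases i <;> fin_cases j <;> simp [ha, hb, hc, ← had]
  · right
    ext i j
    fin_cases i <;> fin_cases j <;> simp [Matrix.SpecialLinearGroup.coe_neg, ha, hb, hc, ← had]

lemma exists_mem_E21_conj_apply_one_zero_ne_zero [IsDomain R] {I : Ideal R} (hI : I ≠ ⊥)
    (A : SL(2, R)) (h1 : A ≠ 1) (hm : A ≠ -1) :
    ∃ y ∈ I, ↑ₘ(E21 y * A * (E21 y)⁻¹) 1 0 ≠ 0 := by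
  simp only [E21_mul_mul_E21_inv_apply_one_zero]
  by_cases hc : ↑ₘA 1 0 = 0
  · have had : ↑ₘA 0 0 * ↑ₘA 1 1 = 1 := by
      have hdet := A.det_coe
      rwa [det_fin_two, hc, mul_zero, sub_zero] at hdet
    have hne : ↑ₘA 0 1 ≠ 0 ∨ ↑ₘA 0 0 ≠ ↑ₘA 1 1 := by
      by_contra! h
      exact (eq_one_or_eq_neg_one_of_apply_eq_zero A hc h.1 h.2).elim h1 hm
    obtain ⟨y, hy, hy_ne, hy_entry⟩ := Ideal.exists_mem_ne_zero_sub_mul_ne_zero hI had hne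
    exact ⟨y, hy, by rw [hc, zero_add]; exact mul_ne_zero hy_ne hy_entry⟩
  · exact ⟨0, I.zero_mem, by simpa using hc⟩

end SL2

lemma exists_ne_one_ne_lt {G : Type*} [One G] (f : G → ℝ) (hf_nonneg : ∀ a, 0 ≤ f a)
    (hf_zero : ∀ a, f a = 0 → a = 1)
    (hf_nondisc : ∀ ε : ℝ, 0 < ε → ∃ g, g ≠ 1 ∧ f g < ε) (z : G) {ε : ℝ} (hε : 0 < ε) :
    ∃ g, g ≠ 1 ∧ g ≠ z ∧ f g < ε := by
  by_cases hz : z = 1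
  · obtain ⟨g, hg1, hgε⟩ := hf_nondisc ε hε
    exact ⟨g, hg1, hz ▸ hg1, hgε⟩
  · have hfz : 0 < f z := (hf_nonneg z).lt_of_ne fun h => hz (hf_zero z h.symm)
    obtain ⟨g, hg1, hgε⟩ := hf_nondisc (min ε (f z)) (lt_min hε hfz)
    refine ⟨g, hg1, ?_, hgε.trans_le (min_le_left _ _)⟩
    rintro rfl
    exact (hgε.trans_le (min_le_right _ _)).false

lemma Subgroup.exists_ne_one_coe_ne_lt {G : Type*} [Group G] {H : Subgroup G} (f : H → ℝ)
    (hf_nonneg : ∀ a, 0 ≤ f a) (hf_zero : ∀ a, f a = 0 → a = 1)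
    (hf_nondisc : ∀ ε : ℝ, 0 < ε → ∃ g, g ≠ 1 ∧ f g < ε) (t : G) {ε : ℝ} (hε : 0 < ε) :
    ∃ g : H, g ≠ 1 ∧ (g : G) ≠ t ∧ f g < ε := by
  by_cases ht : t ∈ H
  · obtain ⟨g, hg1, hgt, hgε⟩ := exists_ne_one_ne_lt f hf_nonneg hf_zero hf_nondisc ⟨t, ht⟩ hε
    exact ⟨g, hg1, fun h => hgt (Subtype.ext h), hgε⟩
  · obtain ⟨g, hg1, hgε⟩ := hf_nondisc ε hε
    exact ⟨g, hg1, fun h => ht (h ▸ g.2), hgε⟩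

theorem stmt6_general {R : Type*} [CommRing R] [IsDomain R]
    (I : Ideal R) (hI : I ≠ ⊥)
    (f : (E2I R I) → ℝ)
    (hf_nonneg : ∀ a, 0 ≤ f a)
    (hf_zero : ∀ a, f a = 0 ↔ a = 1)
    (hf_conj : ∀ a b, f (a * b * a⁻¹) = f b)
    (hf_nondisc : ∀ ε : ℝ, 0 < ε → ∃ g : (E2I R I), g ≠ 1 ∧ f g < ε) :
    ∀ ε : ℝ, 0 < ε → ∃ A : (E2I R I),
      (A : Matrix.SpecialLinearGroup (Fin 2) R).1 1 0 ≠ 0 ∧ f A ≤ ε := by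
  intro ε hε
  obtain ⟨g, hg1, hgm, hgε⟩ := Subgroup.exists_ne_one_coe_ne_lt f hf_nonneg
    (fun a => (hf_zero a).1) hf_nondisc (-1) hε
  obtain ⟨y, hy, hA⟩ :=
    SL2.exists_mem_E21_conj_apply_one_zero_ne_zero hI g (OneMemClass.coe_eq_one.not.2 hg1) hgm
  let h : E2I R I := ⟨E21 y, SL2.E21_mem_E2I hy⟩
  exact ⟨h * g * h⁻¹, hA, (hf_conj h g).trans_le hgε.le⟩

/-- From the proof of Lemma 3.4: for a non-discrete conjugation-invariant norm
on `E(2,R,I)` (with `R` a domain and `I` a nonzero ideal) and every `ε > 0`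
there is an element of `E(2,R,I)` with nonzero `(2,1)`-entry and norm `≤ ε`. -/
theorem stmt6 {R : Type*} [CommRing R] [IsDomain R]
    (I : Ideal R) (hI : I ≠ ⊥)
    (f : (E2I R I) → ℝ)
    (hf_nonneg : ∀ a, 0 ≤ f a)
    (hf_zero : ∀ a, f a = 0 ↔ a = 1)
    (hf_inv : ∀ a, f a⁻¹ = f a)
    (hf_mul : ∀ a b, f (a * b) ≤ f a + f b)
    (hf_conj : ∀ a b, f (a * b * a⁻¹) = f b)
    (hf_nondisc : ∀ ε : ℝ, 0 < ε → ∃ g : (E2I R I), g ≠ 1 ∧ f g < ε) :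
    ∀ ε : ℝ, 0 < ε → ∃ A : (E2I R I),
      (A : Matrix.SpecialLinearGroup (Fin 2) R).1 1 0 ≠ 0 ∧ f A ≤ ε :=
  stmt6_general I hI f hf_nonneg hf_zero hf_conj hf_nondisc
end
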